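/- Let U be a finite set, R a finite collection of subsets of U, n a natural number, and let w1, w3, s be positive integers. Set m = s · w3 · n, and for a subcollection M ⊆ R define F_w(M) = w1 · (m+1) · (|U| − |⋃_{S∈M} S|) + w3 · s · |M|. Then there exists a subcollection M ⊆ R with F_w(M) ≤ m if and only if there exists a subcollection M' ⊆ R with |M'| ≤ n and ⋃_{S∈M'} S = U. (This is the combinatorial core of the reduction showing that the weighted mapping selection problem is NP-hard.) -/

import Mathlib

/-!
The weight `w1 * (m + 1)` on every uncovered element exceeds the budget `m`, so a subcollection
within budget must cover `U`; what remains of the budget is then `w3 * s * |M| ≤ s * w3 * n`,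
i.e. `|M| ≤ n`. Hence the subcollections within budget are exactly the set covers of size at most `n`.
-/

theorem mul_succ_mul_add_le_iff {w d c m : ℕ} (hw : 0 < w) :
    w * (m + 1) * d + c ≤ m ↔ d = 0 ∧ c ≤ m := by
  constructor
  · intro h
    refine ⟨?_, le_of_add_le_right h⟩
    by_contra hd
    have : m + 1 ≤ w * (m + 1) * d :=
      calc m + 1 = 1 * (m + 1) * 1 := by ring
        _ ≤ w * (m + 1) * d := by gcongr <;> omega
    omega
  · rintro ⟨rfl, hc⟩
    simpa using hc

theorem stmt_7 {α : Type*} [DecidableEq α] (U : Finset α) (R : Finset (Finset α))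
    (hR : ∀ S ∈ R, S ⊆ U) (n : ℕ) (w1 w3 s : ℕ) (hw1 : 0 < w1) (hw3 : 0 < w3)
    (hs : 0 < s) (m : ℕ) (hm : m = s * w3 * n)
    (Fw : Finset (Finset α) → ℕ)
    (hFw : ∀ M, Fw M = w1 * (m + 1) * (U.card - (M.biUnion id).card) + w3 * s * M.card) :
    (∃ M ⊆ R, Fw M ≤ m) ↔ (∃ M' ⊆ R, M'.card ≤ n ∧ M'.biUnion id = U) := by
  have within_budget_iff : ∀ M ⊆ R, Fw M ≤ m ↔ M.card ≤ n ∧ M.biUnion id = U := by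
    intro M hM
    have hcover : M.biUnion id ⊆ U := Finset.biUnion_subset.2 fun S hS => hR S (hM hS)
    rw [hFw, mul_succ_mul_add_le_iff hw1, Nat.sub_eq_zero_iff_le,
      Finset.eq_iff_card_le_of_subset hcover, hm, mul_comm w3 s,
      Nat.mul_le_mul_left_iff (by positivity), and_comm]
  exact exists_congr fun M => and_congr_right (within_budget_iff M)
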